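/- arXiv:0903.5466 — 4 statements merged into one kernel-verified Lean document; each statement's English description precedes it below -/
import Mathlib

section
/- Let p₀, p₁ be real numbers with 0 ≤ p₁ ≤ p₀ ≤ 1 and p₀ + p₁ ≤ 1. Then: (i) for all q₀, q₁ ∈ [0,1], min{q₀·p₀ + q₁·(1 − p₀), (1 − q₀)·p₁ + (1 − q₁)·(1 − p₁)} ≤ (1 − p₁)/(2 − p₀ − p₁); and (ii) this bound is attained, e.g. by q₀ = 1 and q₁ = (1 − p₀ − p₁)/(2 − p₀ − p₁). -/
/-!
Weighting the two success probabilities by `1 - p₁` and `1 - p₀` eliminates `q₁`: the weighted sum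
is `1 - p₁ - (1 - q₀)(p₀ - p₁) ≤ 1 - p₁`. The minimum is at most the weighted mean, which gives
`(1 - p₁)/(2 - p₀ - p₁)`. The proposed strategy makes both success probabilities equal to this value.
-/

theorem add_mul_min_le_mul_add_mul {α : Type*} [Semiring α] [LinearOrder α] [IsOrderedRing α]
    {a b : α} (ha : 0 ≤ a) (hb : 0 ≤ b) (x y : α) :
    (a + b) * min x y ≤ a * x + b * y := by
  rw [add_mul]
  exact add_le_add (mul_le_mul_of_nonneg_left (min_le_left x y) ha)
    (mul_le_mul_of_nonneg_left (min_le_right x y) hb)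

theorem weighted_success_eq (p₀ p₁ q₀ q₁ : ℝ) :
    (1 - p₁) * (q₀ * p₀ + q₁ * (1 - p₀)) + (1 - p₀) * ((1 - q₀) * p₁ + (1 - q₁) * (1 - p₁))
      = 1 - p₁ - (1 - q₀) * (p₀ - p₁) := by
  ring

theorem postprocessing_bound_small_general (p₀ p₁ : ℝ) (h₂ : p₁ ≤ p₀) (h₃ : p₀ ≤ 1)
    (h₄ : p₀ + p₁ ≤ 1) :
    (∀ q₀ q₁ : ℝ, q₀ ∈ Set.Icc (0 : ℝ) 1 → q₁ ∈ Set.Icc (0 : ℝ) 1 →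
      min (q₀ * p₀ + q₁ * (1 - p₀)) ((1 - q₀) * p₁ + (1 - q₁) * (1 - p₁))
        ≤ (1 - p₁) / (2 - p₀ - p₁)) ∧
    min (1 * p₀ + ((1 - p₀ - p₁) / (2 - p₀ - p₁)) * (1 - p₀))
        ((1 - 1) * p₁ + (1 - (1 - p₀ - p₁) / (2 - p₀ - p₁)) * (1 - p₁))
      = (1 - p₁) / (2 - p₀ - p₁) := by
  have hD : 0 < 2 - p₀ - p₁ := by linarith
  refine ⟨fun q₀ q₁ hq₀ _ ↦ ?_, ?_⟩
  · rw [le_div_iff₀ hD, mul_comm]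
    calc (2 - p₀ - p₁) * min (q₀ * p₀ + q₁ * (1 - p₀)) ((1 - q₀) * p₁ + (1 - q₁) * (1 - p₁))
        = ((1 - p₁) + (1 - p₀)) * min (q₀ * p₀ + q₁ * (1 - p₀))
            ((1 - q₀) * p₁ + (1 - q₁) * (1 - p₁)) := by ring
      _ ≤ (1 - p₁) * (q₀ * p₀ + q₁ * (1 - p₀))
            + (1 - p₀) * ((1 - q₀) * p₁ + (1 - q₁) * (1 - p₁)) :=
        add_mul_min_le_mul_add_mul (by linarith) (by linarith) _ _
      _ = 1 - p₁ - (1 - q₀) * (p₀ - p₁) := weighted_success_eq p₀ p₁ q₀ q₁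
      _ ≤ 1 - p₁ := sub_le_self _ (mul_nonneg (sub_nonneg.2 hq₀.2) (sub_nonneg.2 h₂))
  · have h_zero : 1 * p₀ + ((1 - p₀ - p₁) / (2 - p₀ - p₁)) * (1 - p₀)
        = (1 - p₁) / (2 - p₀ - p₁) := by
      field_simp
      ring
    have h_one : (1 - 1) * p₁ + (1 - (1 - p₀ - p₁) / (2 - p₀ - p₁)) * (1 - p₁)
        = (1 - p₁) / (2 - p₀ - p₁) := by
      field_simp
      ring
    rw [h_zero, h_one, min_self]

/-- Let `0 ≤ p₁ ≤ p₀ ≤ 1` with `p₀ + p₁ ≤ 1`. Then (i) for all `q₀, q₁ ∈ [0,1]`,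
the worst-case success probability
`min (q₀ p₀ + q₁ (1 − p₀)) ((1 − q₀) p₁ + (1 − q₁)(1 − p₁))` is at most
`(1 − p₁)/(2 − p₀ − p₁)`; and (ii) this bound is attained by `q₀ = 1`,
`q₁ = (1 − p₀ − p₁)/(2 − p₀ − p₁)`. -/
theorem postprocessing_bound_small (p₀ p₁ : ℝ) (h₁ : 0 ≤ p₁) (h₂ : p₁ ≤ p₀) (h₃ : p₀ ≤ 1)
    (h₄ : p₀ + p₁ ≤ 1) :
    (∀ q₀ q₁ : ℝ, q₀ ∈ Set.Icc (0 : ℝ) 1 → q₁ ∈ Set.Icc (0 : ℝ) 1 →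
      min (q₀ * p₀ + q₁ * (1 - p₀)) ((1 - q₀) * p₁ + (1 - q₁) * (1 - p₁))
        ≤ (1 - p₁) / (2 - p₀ - p₁)) ∧
    min (1 * p₀ + ((1 - p₀ - p₁) / (2 - p₀ - p₁)) * (1 - p₀))
        ((1 - 1) * p₁ + (1 - (1 - p₀ - p₁) / (2 - p₀ - p₁)) * (1 - p₁))
      = (1 - p₁) / (2 - p₀ - p₁) :=
  postprocessing_bound_small_general p₀ p₁ h₂ h₃ h₄
end

section
/- For all natural numbers n and t with 1 ≤ t ≤ ⌊n/2⌋, there exists q₀ ∈ [0,1] (namely q₀ = (n − t + 1)/(n + 1)) such that: (i) q₀ ≥ 1 − t/(n + 1), so that on inputs of weight k < t the algorithm outputting 0 with probability q₀ succeeds with probability at least 1 − t/(n + 1); and (ii) for every k with t ≤ k ≤ ⌊n/2⌋, 1 − q₀·∑_{ℓ=0}^{t−1} p_k(ℓ) ≥ 1 − t/(n + 1). Hence the threshold function Th_t can be computed from a weak Schur sampling outcome with worst-case success probability at least 1 − t/(n + 1). -/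
/-!
The partial sums of `p_k` telescope: `∑_{ℓ < t} p_k(ℓ) = C(n, t-1) / C(n, k)`. With
`q₀ = (n - t + 1)/(n + 1)`, the identity `(n - t + 1) C(n, t-1) = t C(n, t)` and the
monotonicity of `C(n, ·)` below `n/2` give
`q₀ ∑_{ℓ < t} p_k(ℓ) = t C(n, t) / ((n + 1) C(n, k)) ≤ t / (n + 1)`.
-/

/-- The outcome distribution of weak Schur sampling on an `n`-qubit basis state of
Hamming weight `k`: `p_k(ℓ) = (C(n,ℓ) − C(n,ℓ−1))/C(n,k)` for `ℓ ≤ k` (with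
`C(n,ℓ−1)` taken to be `0` when `ℓ = 0`), and `p_k(ℓ) = 0` for `ℓ > k`. -/
noncomputable def schurProb (n k ℓ : ℕ) : ℝ :=
  if ℓ ≤ k then
    ((n.choose ℓ : ℝ) - (if ℓ = 0 then 0 else (n.choose (ℓ - 1) : ℝ))) / (n.choose k : ℝ)
  else 0

open Finset

theorem Nat.choose_le_choose_of_le_half {n r s : ℕ} (hrs : r ≤ s) (hs : s ≤ n / 2) :
    n.choose r ≤ n.choose s := by
  induction s, hrs using Nat.le_induction with
  | base => rfl
  | succ s _ ih => exact (ih (by omega)).trans (Nat.choose_le_succ_of_lt_half_left (by omega))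

theorem Nat.cast_choose_mul_sub (n s : ℕ) :
    (n.choose s : ℝ) * (n - s) = n.choose (s + 1) * (s + 1) := by
  rcases le_or_gt s n with hs | hs
  · have h := congrArg (Nat.cast (R := ℝ)) (Nat.choose_succ_right_eq n s)
    push_cast [Nat.cast_sub hs] at h
    exact h.symm
  · simp [Nat.choose_eq_zero_of_lt hs, Nat.choose_eq_zero_of_lt (hs.trans (Nat.lt_succ_self s))]

theorem sum_range_succ_schurProb {n k s : ℕ} (hs : s < k) :
    ∑ ℓ ∈ range (s + 1), schurProb n k ℓ = n.choose s / n.choose k := by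
  induction s with
  | zero => simp [schurProb]
  | succ s ih =>
    rw [sum_range_succ, ih (by omega), schurProb, if_pos hs.le, if_neg s.succ_ne_zero,
      Nat.add_sub_cancel]
    ring

theorem sub_mul_sum_range_succ_schurProb_le {n k s : ℕ} (hs : s < k) (hk : k ≤ n / 2) :
    ((n : ℝ) - s) * ∑ ℓ ∈ range (s + 1), schurProb n k ℓ ≤ s + 1 := by
  have hchoose_pos : (0 : ℝ) < n.choose k := by
    exact_mod_cast Nat.choose_pos (hk.trans (Nat.div_le_self n 2))
  have hmono : (n.choose (s + 1) : ℝ) ≤ n.choose k := by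
    exact_mod_cast Nat.choose_le_choose_of_le_half hs hk
  rw [sum_range_succ_schurProb hs, mul_div_assoc', div_le_iff₀ hchoose_pos, mul_comm,
    Nat.cast_choose_mul_sub, mul_comm]
  gcongr

/-- For `1 ≤ t ≤ ⌊n/2⌋` there exists `q₀ ∈ [0,1]` (namely `q₀ = (n − t + 1)/(n + 1)`)
such that (i) `q₀ ≥ 1 − t/(n + 1)` (success probability on inputs of weight `k < t`),
and (ii) for each `t ≤ k ≤ ⌊n/2⌋`, `1 − q₀ ∑_{ℓ=0}^{t−1} p_k(ℓ) ≥ 1 − t/(n + 1)`.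
Hence `Th_t` can be computed from a weak Schur sampling outcome with worst-case
success probability at least `1 − t/(n + 1)`. -/
theorem threshold_two_sided (n t : ℕ) (ht : 1 ≤ t) (htn : t ≤ n / 2) :
    ∃ q₀ : ℝ, q₀ ∈ Set.Icc (0 : ℝ) 1 ∧
      q₀ = ((n : ℝ) - t + 1) / ((n : ℝ) + 1) ∧
      q₀ ≥ 1 - (t : ℝ) / ((n : ℝ) + 1) ∧
      ∀ k : ℕ, t ≤ k → k ≤ n / 2 →
        1 - q₀ * ∑ ℓ ∈ Finset.range t, schurProb n k ℓ ≥ 1 - (t : ℝ) / ((n : ℝ) + 1) := by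
  obtain ⟨s, rfl⟩ := Nat.exists_eq_add_of_le' ht
  have hsn : (s : ℝ) + 1 ≤ n := by exact_mod_cast htn.trans (Nat.div_le_self n 2)
  have hn : (0 : ℝ) < n + 1 := by positivity
  have hq₀ : ((n : ℝ) - ↑(s + 1) + 1) / (n + 1) = 1 - ↑(s + 1) / (n + 1) := by
    field_simp
    push_cast
    ring
  refine ⟨_, ⟨?_, ?_⟩, rfl, hq₀.ge, fun k hk hkn => ?_⟩
  · push_cast
    exact div_nonneg (by linarith) hn.le
  · rw [div_le_one hn]
    push_cast
    linarith
  · have hbound := sub_mul_sum_range_succ_schurProb_le hk hkn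
    push_cast at hbound ⊢
    rw [div_mul_eq_mul_div, show (n : ℝ) - (s + 1) + 1 = n - s by ring]
    gcongr
end

section
/- For all natural numbers n and k with 0 ≤ k < ⌊n/2⌋ and every function e : ℕ → ℝ satisfying 0 ≤ e(ℓ) ≤ 1 for all ℓ, the average success probability of the test e at distinguishing Hamming weight k from k+1 satisfies (1/2)·(∑_{ℓ=0}^{k+1} p_k(ℓ)·(1 − e(ℓ)) + ∑_{ℓ=0}^{k+1} p_{k+1}(ℓ)·e(ℓ)) ≤ 1 − (k+1)/(2(n − k)). In particular the worst-case success probability of any procedure distinguishing weight k from weight k+1 based on a weak Schur sampling outcome is at most 1 − (k+1)/(2(n − k)). -/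
open Finset

noncomputable def schurNumerator (n ℓ : ℕ) : ℝ :=
  (n.choose ℓ : ℝ) - (if ℓ = 0 then 0 else (n.choose (ℓ - 1) : ℝ))

theorem schurProb_of_le {n k ℓ : ℕ} (hℓ : ℓ ≤ k) :
    schurProb n k ℓ = schurNumerator n ℓ / n.choose k :=
  if_pos hℓ

theorem schurProb_of_lt {n k ℓ : ℕ} (hℓ : k < ℓ) : schurProb n k ℓ = 0 :=
  if_neg (Nat.not_le.2 hℓ)

theorem schurNumerator_nonneg {n ℓ : ℕ} (hℓ : ℓ ≤ n / 2) : 0 ≤ schurNumerator n ℓ := by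
  unfold schurNumerator
  rcases ℓ with _ | m
  · simp
  · have : n.choose m ≤ n.choose (m + 1) := Nat.choose_le_succ_of_lt_half_left (by omega)
    simp only [Nat.add_one_ne_zero, if_false, Nat.add_sub_cancel, sub_nonneg]
    exact_mod_cast this

theorem sum_schurNumerator (n k : ℕ) :
    ∑ ℓ ∈ range (k + 1), schurNumerator n ℓ = n.choose k := by
  have := sum_range_sub (fun m ↦ if m = 0 then (0 : ℝ) else n.choose (m - 1)) (k + 1)
  simpa [schurNumerator] using this

theorem sum_schurProb {n k : ℕ} (hk : k ≤ n) :
    ∑ ℓ ∈ range (k + 1), schurProb n k ℓ = 1 := by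
  have hpos : (n.choose k : ℝ) ≠ 0 := by exact_mod_cast (Nat.choose_pos hk).ne'
  rw [sum_congr rfl fun ℓ hℓ ↦ schurProb_of_le (Nat.lt_succ_iff.1 (mem_range.1 hℓ)),
    ← sum_div, sum_schurNumerator, div_self hpos]

theorem schurProb_nonneg {n k ℓ : ℕ} (hℓ : ℓ ≤ n / 2) : 0 ≤ schurProb n k ℓ := by
  rcases le_or_gt ℓ k with h | h
  · rw [schurProb_of_le h]
    exact div_nonneg (schurNumerator_nonneg hℓ) (Nat.cast_nonneg _)
  · rw [schurProb_of_lt h]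

theorem schurProb_succ_le {n k ℓ : ℕ} (hk : k < n / 2) (hℓ : ℓ ≤ k) :
    schurProb n (k + 1) ℓ ≤ schurProb n k ℓ := by
  rw [schurProb_of_le hℓ, schurProb_of_le (hℓ.trans k.le_succ)]
  have hpos : (0 : ℝ) < n.choose k := by exact_mod_cast Nat.choose_pos (by omega)
  exact div_le_div_of_nonneg_left (schurNumerator_nonneg (by omega)) hpos
    (by exact_mod_cast Nat.choose_le_succ_of_lt_half_left hk)

theorem schurProb_succ_self {n k : ℕ} (hk : k < n) :
    schurProb n (k + 1) (k + 1) = 1 - (k + 1) / (n - k) := by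
  have hnk : (0 : ℝ) < n - k := by
    rw [sub_pos]; exact_mod_cast hk
  have hpos : (0 : ℝ) < n.choose (k + 1) := by exact_mod_cast Nat.choose_pos hk
  have hchoose : (n.choose k : ℝ) * (n - k) = (k + 1) * n.choose (k + 1) := by
    rw [← Nat.cast_sub hk.le, mul_comm (_ + 1 : ℝ)]
    exact_mod_cast (Nat.choose_succ_right_eq n k).symm
  rw [schurProb_of_le le_rfl, schurNumerator, if_neg k.succ_ne_zero, Nat.add_sub_cancel,
    sub_div, div_self hpos.ne', (div_eq_div_iff hpos.ne' hnk.ne').2 hchoose]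

theorem sum_max_schurProb {n k : ℕ} (hk : k < n / 2) :
    ∑ ℓ ∈ range (k + 2), max (schurProb n k ℓ) (schurProb n (k + 1) ℓ)
      = 1 + schurProb n (k + 1) (k + 1) := by
  have hlast : schurProb n k (k + 1) ≤ schurProb n (k + 1) (k + 1) := by
    rw [schurProb_of_lt k.lt_succ_self]
    exact schurProb_nonneg hk
  rw [sum_range_succ, max_eq_right hlast, ← sum_schurProb (n := n) (k := k) (by omega)]
  congr 1
  exact sum_congr rfl fun ℓ hℓ ↦
    max_eq_left (schurProb_succ_le hk (Nat.lt_succ_iff.1 (mem_range.1 hℓ)))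

/-- For `0 ≤ k < ⌊n/2⌋` and any randomized test `e : ℕ → ℝ` with `0 ≤ e(ℓ) ≤ 1`
(`e(ℓ)` being the probability of declaring 'weight `k+1`' upon outcome `ℓ`), the
average success probability at distinguishing weight `k` from weight `k+1` satisfies
`(1/2)(∑_{ℓ=0}^{k+1} p_k(ℓ)(1 − e(ℓ)) + ∑_{ℓ=0}^{k+1} p_{k+1}(ℓ) e(ℓ))
  ≤ 1 − (k+1)/(2(n−k))`. -/
theorem distinguishing_bound (n k : ℕ) (hk : k < n / 2) (e : ℕ → ℝ)
    (he : ∀ ℓ, 0 ≤ e ℓ ∧ e ℓ ≤ 1) :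
    (1 / 2 : ℝ) * (∑ ℓ ∈ Finset.range (k + 2), schurProb n k ℓ * (1 - e ℓ)
        + ∑ ℓ ∈ Finset.range (k + 2), schurProb n (k + 1) ℓ * e ℓ)
      ≤ 1 - ((k : ℝ) + 1) / (2 * ((n : ℝ) - k)) := by
  have hterm : ∀ ℓ, schurProb n k ℓ * (1 - e ℓ) + schurProb n (k + 1) ℓ * e ℓ
      ≤ max (schurProb n k ℓ) (schurProb n (k + 1) ℓ) := fun ℓ ↦ by
    simpa only [smul_eq_mul, mul_comm] using
      Convex.combo_le_max (schurProb n k ℓ) (schurProb n (k + 1) ℓ)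
        (sub_nonneg.2 (he ℓ).2) (he ℓ).1 (sub_add_cancel 1 (e ℓ))
  have hnk : (0 : ℝ) < n - k := by
    rw [sub_pos]; exact_mod_cast (show k < n by omega)
  calc (1 / 2 : ℝ) * (∑ ℓ ∈ range (k + 2), schurProb n k ℓ * (1 - e ℓ)
        + ∑ ℓ ∈ range (k + 2), schurProb n (k + 1) ℓ * e ℓ)
      ≤ 1 / 2 * ∑ ℓ ∈ range (k + 2), max (schurProb n k ℓ) (schurProb n (k + 1) ℓ) := by
        rw [← sum_add_distrib]
        gcongr with ℓ
        exact hterm ℓ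
    _ = 1 / 2 * (1 + (1 - (k + 1) / (n - k))) := by
        rw [sum_max_schurProb hk, schurProb_succ_self (by omega)]
    _ = 1 - (k + 1) / (2 * (n - k)) := by
        field_simp
        ring
end

section
/- Let n be a natural number with n ≥ 1 and set m = ⌊n/2⌋. For every array of real numbers O(k,ℓ) for 0 ≤ k, ℓ ≤ m satisfying O(k,ℓ) ≥ 0 and ∑_{k=0}^{m} O(k,ℓ) = 1 for each ℓ ≤ m, the total success probability of the inference strategy O under a uniform prior satisfies ∑_{k=0}^{m} ∑_{ℓ=0}^{k} O(k,ℓ)·(C(n,ℓ) − C(n,ℓ−1))/C(n,k) ≤ ∑_{k=0}^{m} (1 − k/(n − k + 1)). That is, under a uniform prior on the Hamming weight, no strategy for inferring the weight from a weak Schur sampling outcome beats the standard algorithm that guesses k = ℓ. -/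
/-!
Write `d(ℓ) = C(n,ℓ) - C(n,ℓ-1)`. Since `C(n,·)` increases on `[0, n/2]`, guessing `k` on
outcome `ℓ ≤ k` is rewarded with `d(ℓ)/C(n,k) ≤ d(ℓ)/C(n,ℓ)`, the success probability of the
standard guess on input `ℓ`. Summing over `k` first, the column sums of `O` equal `1`, leaving
`∑_ℓ d(ℓ)/C(n,ℓ)`, and `d(ℓ)/C(n,ℓ) = 1 - ℓ/(n - ℓ + 1)` because
`ℓ C(n,ℓ) = (n - ℓ + 1) C(n,ℓ-1)`.
-/

open Finset

theorem Nat.choose_le_choose_of_le_of_le_half {n a b : ℕ} (hab : a ≤ b) (hb : b ≤ n / 2) :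
    n.choose a ≤ n.choose b := by
  induction b, hab using Nat.le_induction with
  | base => exact le_rfl
  | succ k _ ih => exact (ih (by omega)).trans (Nat.choose_le_succ_of_lt_half_left (by omega))

/-- Dimension of the irreducible representation of `Sₙ` of shape `(n - ℓ, ℓ)`. -/
noncomputable def twoRowDim (n ℓ : ℕ) : ℝ :=
  n.choose ℓ - if ℓ = 0 then 0 else (n.choose (ℓ - 1) : ℝ)

theorem twoRowDim_nonneg {n ℓ : ℕ} (hℓ : ℓ ≤ n / 2) : 0 ≤ twoRowDim n ℓ := by
  unfold twoRowDim
  split_ifs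
  · simp
  · exact sub_nonneg.mpr (mod_cast Nat.choose_le_choose_of_le_of_le_half (Nat.sub_le ℓ 1) hℓ)

theorem twoRowDim_div_choose {n ℓ : ℕ} (hℓ : ℓ ≤ n) :
    twoRowDim n ℓ / n.choose ℓ = 1 - (ℓ : ℝ) / ((n : ℝ) - ℓ + 1) := by
  cases ℓ with
  | zero => simp [twoRowDim]
  | succ j =>
    have hchoose : (n.choose (j + 1) : ℝ) * (j + 1) = n.choose j * ((n : ℝ) - (j + 1) + 1) := by
      have := congrArg (Nat.cast : ℕ → ℝ) (Nat.choose_succ_right_eq n j)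
      push_cast [Nat.cast_sub (by omega : j ≤ n)] at this
      linarith
    have hchoose_pos : (0 : ℝ) < n.choose (j + 1) := mod_cast Nat.choose_pos hℓ
    have hden : (0 : ℝ) < (n : ℝ) - (j + 1) + 1 := by
      have : (j : ℝ) + 1 ≤ n := mod_cast hℓ
      linarith
    simp only [twoRowDim, Nat.add_sub_cancel, Nat.add_one_ne_zero, if_false, Nat.cast_add,
      Nat.cast_one]
    field_simp
    linarith

theorem sum_sum_range_mul_le_of_colStochastic {m : ℕ} {O p : ℕ → ℕ → ℝ} {q : ℕ → ℝ}
    (hO_nonneg : ∀ k ℓ, k ≤ m → ℓ ≤ m → 0 ≤ O k ℓ)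
    (hO_sum : ∀ ℓ, ℓ ≤ m → ∑ k ∈ range (m + 1), O k ℓ = 1)
    (hq : ∀ ℓ, ℓ ≤ m → 0 ≤ q ℓ) (hpq : ∀ k ℓ, ℓ ≤ k → k ≤ m → p k ℓ ≤ q ℓ) :
    ∑ k ∈ range (m + 1), ∑ ℓ ∈ range (k + 1), O k ℓ * p k ℓ ≤ ∑ ℓ ∈ range (m + 1), q ℓ := by
  calc ∑ k ∈ range (m + 1), ∑ ℓ ∈ range (k + 1), O k ℓ * p k ℓ
      ≤ ∑ k ∈ range (m + 1), ∑ ℓ ∈ range (m + 1), O k ℓ * q ℓ := by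
        refine sum_le_sum fun k hk => ?_
        have hk : k ≤ m := Nat.lt_succ_iff.mp (mem_range.mp hk)
        calc ∑ ℓ ∈ range (k + 1), O k ℓ * p k ℓ
            ≤ ∑ ℓ ∈ range (k + 1), O k ℓ * q ℓ := by
              refine sum_le_sum fun ℓ hℓ => ?_
              have hℓ : ℓ ≤ k := Nat.lt_succ_iff.mp (mem_range.mp hℓ)
              exact mul_le_mul_of_nonneg_left (hpq k ℓ hℓ hk) (hO_nonneg k ℓ hk (hℓ.trans hk))
          _ ≤ ∑ ℓ ∈ range (m + 1), O k ℓ * q ℓ := by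
              refine sum_le_sum_of_subset_of_nonneg (range_subset_range.mpr (by omega))
                fun ℓ hℓ _ => ?_
              have hℓ : ℓ ≤ m := Nat.lt_succ_iff.mp (mem_range.mp hℓ)
              exact mul_nonneg (hO_nonneg k ℓ hk hℓ) (hq ℓ hℓ)
    _ = ∑ ℓ ∈ range (m + 1), (∑ k ∈ range (m + 1), O k ℓ) * q ℓ := by
        rw [sum_comm]; simp only [sum_mul]
    _ = ∑ ℓ ∈ range (m + 1), q ℓ :=
        sum_congr rfl fun ℓ hℓ => by rw [hO_sum ℓ (Nat.lt_succ_iff.mp (mem_range.mp hℓ)), one_mul]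

theorem uniform_prior_standard_optimal_general (n : ℕ) (m : ℕ) (hm : m = n / 2)
    (O : ℕ → ℕ → ℝ)
    (hO_nonneg : ∀ k ℓ, k ≤ m → ℓ ≤ m → 0 ≤ O k ℓ)
    (hO_sum : ∀ ℓ, ℓ ≤ m → ∑ k ∈ Finset.range (m + 1), O k ℓ = 1) :
    ∑ k ∈ Finset.range (m + 1), ∑ ℓ ∈ Finset.range (k + 1),
        O k ℓ * (((n.choose ℓ : ℝ) - (if ℓ = 0 then 0 else (n.choose (ℓ - 1) : ℝ)))
          / (n.choose k : ℝ))
      ≤ ∑ k ∈ Finset.range (m + 1), (1 - (k : ℝ) / ((n : ℝ) - k + 1)) := by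
  subst hm
  have hle_n : ∀ ℓ, ℓ ≤ n / 2 → ℓ ≤ n := fun ℓ hℓ => hℓ.trans (Nat.div_le_self n 2)
  refine sum_sum_range_mul_le_of_colStochastic hO_nonneg hO_sum (fun ℓ hℓ => ?_)
    (fun k ℓ hℓk hk => ?_)
  · rw [← twoRowDim_div_choose (hle_n ℓ hℓ)]
    exact div_nonneg (twoRowDim_nonneg hℓ) (Nat.cast_nonneg _)
  · rw [← twoRowDim_div_choose (hle_n ℓ (hℓk.trans hk))]
    exact div_le_div_of_nonneg_left (twoRowDim_nonneg (hℓk.trans hk))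
      (mod_cast Nat.choose_pos (hle_n ℓ (hℓk.trans hk)))
      (mod_cast Nat.choose_le_choose_of_le_of_le_half hℓk hk)

/-- Let `n ≥ 1` and `m = ⌊n/2⌋`. For every column-stochastic inference strategy
`O(k,ℓ)` (`O(k,ℓ) ≥ 0` and `∑_{k=0}^{m} O(k,ℓ) = 1` for each `ℓ ≤ m`), the total
success probability under a uniform prior satisfies
`∑_{k=0}^{m} ∑_{ℓ=0}^{k} O(k,ℓ)(C(n,ℓ) − C(n,ℓ−1))/C(n,k)
  ≤ ∑_{k=0}^{m} (1 − k/(n − k + 1))`,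
i.e. no strategy beats the standard algorithm that guesses `k = ℓ`. -/
theorem uniform_prior_standard_optimal (n : ℕ) (hn : 1 ≤ n) (m : ℕ) (hm : m = n / 2)
    (O : ℕ → ℕ → ℝ)
    (hO_nonneg : ∀ k ℓ, k ≤ m → ℓ ≤ m → 0 ≤ O k ℓ)
    (hO_sum : ∀ ℓ, ℓ ≤ m → ∑ k ∈ Finset.range (m + 1), O k ℓ = 1) :
    ∑ k ∈ Finset.range (m + 1), ∑ ℓ ∈ Finset.range (k + 1),
        O k ℓ * (((n.choose ℓ : ℝ) - (if ℓ = 0 then 0 else (n.choose (ℓ - 1) : ℝ)))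
          / (n.choose k : ℝ))
      ≤ ∑ k ∈ Finset.range (m + 1), (1 - (k : ℝ) / ((n : ℝ) - k + 1)) :=
  uniform_prior_standard_optimal_general n m hm O hO_nonneg hO_sum
end
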